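/- arXiv:1301.5169 — 3 statements merged into one kernel-verified Lean document; each statement's English description precedes it below -/
import Mathlib

section
/- Let μ := −‖V‖_∞ − 1 and φ_μ(λ) := (λ − μ)^{-1}. Then there is a constant C = C(b,d) depending only on b and d such that for every λ ∈ ℂ \ {μ}, dist(φ_μ(λ), φ_μ(E)) ≥ C · dist(λ, E) / ((1 + ‖V‖_∞)² (1 + |λ|)²). -/
/-!
Write `D = dist(λ, E)` and let `w` be a Landau level. Since `φ_μ` is a Möbius map,
`|φ_μ(λ) - φ_μ(w)| = |λ - w| / (|λ - μ| |w - μ|)`, and as `|μ| = 1 + ‖V‖_∞ ≥ 1` both factors of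
the denominator are at most `|μ| (1 + |·|)`. It then suffices that `D (1 + |w|) ≲ |λ - w| (1 + |λ|)`:
if `|w| ≤ 2 (1 + |λ|)` this follows from `D ≤ |λ - w|`; otherwise `|λ - w| ≥ |w| - |λ|` is
comparable to `1 + |w|`, while `D ≤ |λ| + Λ₀` since `Λ₀ ∈ E`.
-/

open MeasureTheory Metric Set
open scoped ENNReal Topology

noncomputable section

/-- The set `E = {Λ_j}_{j∈ℕ}` of Landau levels `Λ_j = b(d+2j)`, as a subset of `ℂ`. -/
def landauLevels (b : ℝ) (d : ℕ) : Set ℂ :=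
  {z : ℂ | ∃ j : ℕ, z = ((b * (d + 2 * j) : ℝ) : ℂ)}

/-- The half line `I = [Λ₀, +∞)`, `Λ₀ = bd`, as a subset of `ℂ`. -/
def halfLine (b : ℝ) (d : ℕ) : Set ℂ :=
  {z : ℂ | z.im = 0 ∧ (b * d : ℝ) ≤ z.re}

/-- `‖V‖_{L^∞}` (essential supremum norm). -/
def supNorm {α : Type*} {β : Type*} [MeasureSpace α] [NormedAddCommGroup β] (V : α → β) : ℝ :=
  (eLpNorm V ⊤ volume).toReal

section Normed

variable {E : Type*} [SeminormedAddCommGroup E]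

lemma infDist_mul_one_add_norm_le {s : Set E} {z₀ x w : E} {K : ℝ} (hz₀ : z₀ ∈ s)
    (hz₀K : ‖z₀‖ ≤ K) (hw : w ∈ s) :
    infDist x s * (1 + ‖w‖) ≤ 3 * (1 + K) * (dist x w * (1 + ‖x‖)) := by
  have hDw : infDist x s ≤ dist x w := infDist_le_dist_of_mem hw
  have hDz₀ : infDist x s ≤ ‖x‖ + K := by
    calc infDist x s ≤ dist x z₀ := infDist_le_dist_of_mem hz₀
      _ ≤ ‖x‖ + ‖z₀‖ := by rw [dist_eq_norm]; exact norm_sub_le x z₀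
      _ ≤ ‖x‖ + K := by gcongr
  have hK : 0 ≤ K := (norm_nonneg z₀).trans hz₀K
  have hx := norm_nonneg x
  rcases le_or_gt ‖w‖ (2 * (1 + ‖x‖)) with hnear | hfar
  · have hT : 0 ≤ dist x w := dist_nonneg
    nlinarith [mul_le_mul hDw (add_le_add_left hnear 1) (by positivity) hT, mul_nonneg hT hx,
      mul_nonneg (mul_nonneg hT hx) hK, mul_nonneg hT hK]
  · have hfar' : 1 + ‖w‖ ≤ 2 * dist x w := by
      have := norm_sub_norm_le w x
      rw [dist_comm, dist_eq_norm]; linarith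
    nlinarith [mul_le_mul hDz₀ hfar' (by positivity) (by positivity), mul_nonneg hK hx]

end Normed

section NormedField

variable {𝕜 : Type*} [NormedField 𝕜]

lemma norm_sub_le_norm_mul_one_add_norm {z μ : 𝕜} (hμ : 1 ≤ ‖μ‖) : ‖z - μ‖ ≤ ‖μ‖ * (1 + ‖z‖) := by
  nlinarith [norm_sub_le z μ, norm_nonneg z]

lemma dist_inv_sub_inv_sub {x w μ : 𝕜} (hx : x ≠ μ) (hw : w ≠ μ) :
    dist (x - μ)⁻¹ (w - μ)⁻¹ = dist x w / (‖x - μ‖ * ‖w - μ‖) := by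
  rw [dist_inv_inv₀ (sub_ne_zero.2 hx) (sub_ne_zero.2 hw), dist_sub_right]

lemma infDist_div_le_dist_inv_sub_inv_sub {s : Set 𝕜} {z₀ x w μ : 𝕜} {K : ℝ} (hz₀ : z₀ ∈ s)
    (hz₀K : ‖z₀‖ ≤ K) (hw : w ∈ s) (hμs : μ ∉ s) (hx : x ≠ μ) (hμ : 1 ≤ ‖μ‖) :
    (3 * (1 + K))⁻¹ * infDist x s / (‖μ‖ ^ 2 * (1 + ‖x‖) ^ 2) ≤ dist (x - μ)⁻¹ (w - μ)⁻¹ := by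
  have hwμ : w ≠ μ := fun h => hμs (h ▸ hw)
  have hK : 0 < 1 + K := by linarith [(norm_nonneg z₀).trans hz₀K]
  have hxμ : 0 < ‖x - μ‖ := norm_pos_iff.2 (sub_ne_zero.2 hx)
  have hwμ' : 0 < ‖w - μ‖ := norm_pos_iff.2 (sub_ne_zero.2 hwμ)
  have key := infDist_mul_one_add_norm_le (x := x) hz₀ hz₀K hw
  have bx := norm_sub_le_norm_mul_one_add_norm (z := x) hμ
  have bw := norm_sub_le_norm_mul_one_add_norm (z := w) hμ
  rw [dist_inv_sub_inv_sub hx hwμ, div_le_div_iff₀ (by positivity) (by positivity)]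
  have hD : 0 ≤ (3 * (1 + K))⁻¹ * infDist x s := mul_nonneg (by positivity) infDist_nonneg
  calc (3 * (1 + K))⁻¹ * infDist x s * (‖x - μ‖ * ‖w - μ‖)
      ≤ (3 * (1 + K))⁻¹ * infDist x s * ((‖μ‖ * (1 + ‖x‖)) * (‖μ‖ * (1 + ‖w‖))) := by
        gcongr
    _ = (3 * (1 + K))⁻¹ * (infDist x s * (1 + ‖w‖)) * (‖μ‖ ^ 2 * (1 + ‖x‖)) := by ring
    _ ≤ (3 * (1 + K))⁻¹ * (3 * (1 + K) * (dist x w * (1 + ‖x‖))) * (‖μ‖ ^ 2 * (1 + ‖x‖)) := by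
        gcongr
    _ = dist x w * (‖μ‖ ^ 2 * (1 + ‖x‖) ^ 2) := by field_simp

end NormedField

section LandauLevels

variable {b : ℝ} {d : ℕ}

lemma lowestLandauLevel_mem_landauLevels : ((b * d : ℝ) : ℂ) ∈ landauLevels b d :=
  ⟨0, by simp⟩

lemma ofReal_notMem_landauLevels_of_neg (hb : 0 ≤ b) {t : ℝ} (ht : t < 0) :
    (t : ℂ) ∉ landauLevels b d := by
  rintro ⟨j, hj⟩
  have : t = b * (d + 2 * j) := Complex.ofReal_injective hj
  have : 0 ≤ b * (d + 2 * j) := by positivity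
  linarith

end LandauLevels

theorem distortion_landau_levels_general
    (b : ℝ) (hb : 0 < b) (d : ℕ) :
    ∃ Cc : ℝ, 0 < Cc ∧
      ∀ (V : EuclideanSpace ℝ (Fin (2 * d)) → ℂ), MemLp V ⊤ volume →
      ∀ lam : ℂ, lam ≠ ((-(supNorm V) - 1 : ℝ) : ℂ) →
        Cc * infDist lam (landauLevels b d) /
            ((1 + supNorm V) ^ 2 * (1 + ‖lam‖) ^ 2) ≤
          infDist ((lam - ((-(supNorm V) - 1 : ℝ) : ℂ))⁻¹)
            ((fun w : ℂ => (w - ((-(supNorm V) - 1 : ℝ) : ℂ))⁻¹) '' landauLevels b d) := by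
  refine ⟨(3 * (1 + b * d))⁻¹, by positivity, fun V _ lam hlam => ?_⟩
  have hV : 0 ≤ supNorm V := ENNReal.toReal_nonneg
  have hμ : ‖((-(supNorm V) - 1 : ℝ) : ℂ)‖ = 1 + supNorm V := by
    rw [Complex.norm_real, Real.norm_eq_abs, abs_of_neg (by linarith)]
    ring
  have hΛ₀ : ‖((b * d : ℝ) : ℂ)‖ ≤ b * d := by
    rw [Complex.norm_real, Real.norm_eq_abs, abs_of_nonneg (by positivity)]
  have hE : (landauLevels b d).Nonempty := ⟨_, lowestLandauLevel_mem_landauLevels⟩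
  rw [← hμ, le_infDist (hE.image _)]
  rintro _ ⟨w, hw, rfl⟩
  exact infDist_div_le_dist_inv_sub_inv_sub lowestLandauLevel_mem_landauLevels hΛ₀ hw
    (ofReal_notMem_landauLevels_of_neg hb.le (by linarith)) hlam (by rw [hμ]; linarith)

/-- **Lemma 6.2** (distortion lemma for `φ_μ(λ) = (λ - μ)⁻¹`, `μ = -‖V‖_∞ - 1`).  There is a
constant `C = C(b,d)` such that for every `λ ∈ ℂ \ {μ}`,
`dist(φ_μ(λ), φ_μ(E)) ≥ C dist(λ, E) / ((1+‖V‖_∞)² (1+|λ|)²)`. -/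
theorem distortion_landau_levels
    (b : ℝ) (hb : 0 < b) (d : ℕ) (hd : 1 ≤ d) :
    ∃ Cc : ℝ, 0 < Cc ∧
      ∀ (V : EuclideanSpace ℝ (Fin (2 * d)) → ℂ), MemLp V ⊤ volume →
      ∀ lam : ℂ, lam ≠ ((-(supNorm V) - 1 : ℝ) : ℂ) →
        Cc * infDist lam (landauLevels b d) /
            ((1 + supNorm V) ^ 2 * (1 + ‖lam‖) ^ 2) ≤
          infDist ((lam - ((-(supNorm V) - 1 : ℝ) : ℂ))⁻¹)
            ((fun w : ℂ => (w - ((-(supNorm V) - 1 : ℝ) : ℂ))⁻¹) '' landauLevels b d) :=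
  distortion_landau_levels_general b hb d

end
end

section
/- Let μ := −‖V‖_∞ − 1, φ_μ(λ) := (λ − μ)^{-1}, and I := [Λ_0, +∞). Then there is a constant C = C(b,d) such that for every λ ∈ ℂ \ {μ}, dist(φ_μ(λ), φ_μ(I)) ≥ C · dist(λ, I) / ((1 + ‖V‖_∞)² (1 + |λ|)²). -/
/-!
Let `φ(z) = (z - μ)⁻¹` and let `S` be any set not containing `μ`. For `w ∈ S` one has `|φ(λ) - φ(w)| = |λ - w| / (|λ - μ| |w - μ|)` and `|w - μ| ≤ |λ - w| + |λ - μ|`.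
As `t ↦ t / (t + M)` is increasing, this gives
`dist(φ(λ), φ(S)) ≥ D / (M (D + M))` with `D = dist(λ, S)` and `M = |λ - μ|`.
For the half line and `μ = -‖V‖_∞ - 1` both `M` and `D` are `O((1 + ‖V‖_∞)(1 + |λ|))`,
which yields the constant `C = (2 + bd)⁻¹`.
-/

open MeasureTheory Metric Set
open scoped ENNReal Topology

noncomputable section

theorem infDist_div_le_infDist_inv_sub_image {𝕜 : Type*} [NormedField 𝕜] {S : Set 𝕜}
    {μ a : 𝕜} (hμ : μ ∉ S) (ha : a ≠ μ) :
    infDist a S / (‖a - μ‖ * (infDist a S + ‖a - μ‖)) ≤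
      infDist (a - μ)⁻¹ ((fun w => (w - μ)⁻¹) '' S) := by
  rcases S.eq_empty_or_nonempty with rfl | hS
  · simp
  rw [le_infDist (hS.image _), forall_mem_image]
  intro w hw
  have hwμ : w ≠ μ := ne_of_mem_of_not_mem hw hμ
  set D := infDist a S
  set M := ‖a - μ‖
  have hM : 0 < M := norm_pos_iff.2 (sub_ne_zero.2 ha)
  have hD0 : 0 ≤ D := infDist_nonneg
  have hDw : D ≤ dist a w := infDist_le_dist_of_mem hw
  have hwμ_pos : 0 < ‖w - μ‖ := norm_pos_iff.2 (sub_ne_zero.2 hwμ)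
  have hwμ_le : ‖w - μ‖ ≤ dist a w + M := by
    have h := dist_triangle_left w μ a
    rwa [dist_eq_norm, dist_eq_norm a μ] at h
  rw [dist_inv_inv₀ (sub_ne_zero.2 ha) (sub_ne_zero.2 hwμ), dist_sub_right]
  calc D / (M * (D + M))
      ≤ dist a w / (M * (dist a w + M)) := by
        rw [div_le_div_iff₀ (by positivity) (by positivity)]
        nlinarith [mul_le_mul_of_nonneg_right hDw (sq_nonneg M)]
    _ ≤ dist a w / (M * ‖w - μ‖) := by gcongr

theorem ofReal_mem_halfLine_iff {b : ℝ} {d : ℕ} {x : ℝ} :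
    (x : ℂ) ∈ halfLine b d ↔ b * d ≤ x := by
  simp [halfLine]

theorem infDist_halfLine_le {b : ℝ} (hb : 0 ≤ b) (d : ℕ) (z : ℂ) :
    infDist z (halfLine b d) ≤ ‖z‖ + b * d := by
  have hbd : 0 ≤ b * d := by positivity
  calc infDist z (halfLine b d)
      ≤ dist z ((b * d : ℝ) : ℂ) := infDist_le_dist_of_mem (ofReal_mem_halfLine_iff.2 le_rfl)
    _ ≤ ‖z‖ + ‖((b * d : ℝ) : ℂ)‖ := by rw [dist_eq_norm]; exact norm_sub_le _ _
    _ = ‖z‖ + b * d := by rw [Complex.norm_real, Real.norm_of_nonneg hbd]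

theorem norm_sub_ofReal_neg_sub_one_le (z : ℂ) {s : ℝ} (hs : 0 ≤ s) :
    ‖z - ((-s - 1 : ℝ) : ℂ)‖ ≤ (1 + s) * (1 + ‖z‖) := by
  have hμ : ‖((-s - 1 : ℝ) : ℂ)‖ = 1 + s := by
    rw [Complex.norm_real, Real.norm_of_nonpos (by linarith)]
    ring
  nlinarith [norm_sub_le z ((-s - 1 : ℝ) : ℂ), norm_nonneg z]

theorem distortion_half_line_general
    (b : ℝ) (hb : 0 < b) (d : ℕ) :
    ∃ Cc : ℝ, 0 < Cc ∧
      ∀ (V : EuclideanSpace ℝ (Fin (2 * d)) → ℂ), MemLp V ⊤ volume →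
      ∀ lam : ℂ, lam ≠ ((-(supNorm V) - 1 : ℝ) : ℂ) →
        Cc * infDist lam (halfLine b d) /
            ((1 + supNorm V) ^ 2 * (1 + ‖lam‖) ^ 2) ≤
          infDist ((lam - ((-(supNorm V) - 1 : ℝ) : ℂ))⁻¹)
            ((fun w : ℂ => (w - ((-(supNorm V) - 1 : ℝ) : ℂ))⁻¹) '' halfLine b d) := by
  have hbd : 0 ≤ b * d := by positivity
  refine ⟨(2 + b * d)⁻¹, by positivity, fun V _ lam hlam => ?_⟩
  set s := supNorm V
  have hs : 0 ≤ s := ENNReal.toReal_nonneg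
  have hμ : ((-s - 1 : ℝ) : ℂ) ∉ halfLine b d := by
    rw [ofReal_mem_halfLine_iff]
    linarith
  refine le_trans ?_ (infDist_div_le_infDist_inv_sub_image hμ hlam)
  set D := infDist lam (halfLine b d)
  set M := ‖lam - ((-s - 1 : ℝ) : ℂ)‖
  set A := ‖lam‖
  have hM : 0 < M := norm_pos_iff.2 (sub_ne_zero.2 hlam)
  have hD0 : 0 ≤ D := infDist_nonneg
  have hMP : M ≤ (1 + s) * (1 + A) := norm_sub_ofReal_neg_sub_one_le lam hs
  have hDM : D + M ≤ (2 + b * d) * ((1 + s) * (1 + A)) := by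
    have hD : D ≤ A + b * d := infDist_halfLine_le hb.le d lam
    have hA : 0 ≤ A := norm_nonneg lam
    nlinarith [mul_nonneg hbd (mul_nonneg hs hA), mul_nonneg hbd hs, mul_nonneg hbd hA]
  calc (2 + b * d)⁻¹ * D / ((1 + s) ^ 2 * (1 + A) ^ 2)
      = D / ((1 + s) * (1 + A) * ((2 + b * d) * ((1 + s) * (1 + A)))) := by
        rw [inv_mul_eq_div, div_div]
        ring
    _ ≤ D / (M * (D + M)) := by gcongr

/-- **Lemma 6.3** (distortion lemma for `φ_μ(λ) = (λ - μ)⁻¹`, `μ = -‖V‖_∞ - 1`, and the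
half-line `I = [Λ₀, +∞)`).  There is a constant `C = C(b,d)` such that for every
`λ ∈ ℂ \ {μ}`, `dist(φ_μ(λ), φ_μ(I)) ≥ C dist(λ, I) / ((1+‖V‖_∞)² (1+|λ|)²)`. -/
theorem distortion_half_line
    (b : ℝ) (hb : 0 < b) (d : ℕ) (hd : 1 ≤ d) :
    ∃ Cc : ℝ, 0 < Cc ∧
      ∀ (V : EuclideanSpace ℝ (Fin (2 * d)) → ℂ), MemLp V ⊤ volume →
      ∀ lam : ℂ, lam ≠ ((-(supNorm V) - 1 : ℝ) : ℂ) →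
        Cc * infDist lam (halfLine b d) /
            ((1 + supNorm V) ^ 2 * (1 + ‖lam‖) ^ 2) ≤
          infDist ((lam - ((-(supNorm V) - 1 : ℝ) : ℂ))⁻¹)
            ((fun w : ℂ => (w - ((-(supNorm V) - 1 : ℝ) : ℂ))⁻¹) '' halfLine b d) :=
  distortion_half_line_general b hb d
end
end

section
/- Let μ := −‖V‖_∞ − 1, φ_μ(λ) := (λ − μ)^{-1}, I := [Λ_0,+∞), E := {Λ_j}_{j∈ℕ} ⊂ I, r_j := dist(Λ_j, E \ {Λ_j}) = 2b, A := ∪_j B(Λ_j, 2r_j), D := ℂ \ A; analogously, for ω ∈ φ_μ(E) let r_ω := dist(ω, φ_μ(E) \ {ω}), 𝒜 := ∪_ω B(ω, 2r_ω), 𝒟 := ℂ \ 𝒜. Then: (i) for every λ ∈ D one has dist(λ,E)/2 ≤ dist(λ,I) ≤ dist(λ,E), and for every λ with φ_μ(λ) ∈ 𝒟 one has dist(φ_μ(λ),φ_μ(E))/2 ≤ dist(φ_μ(λ),φ_μ(I)) ≤ dist(φ_μ(λ),φ_μ(E)); (ii) there is a constant C = C(b,d) such that for every λ ∈ A, dist(φ_μ(λ),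 φ_μ(E)) ≥ C · dist(λ, E) / ((1 + ‖V‖_∞)² (1 + |λ|)²). -/
open MeasureTheory Metric Set
open scoped ENNReal Topology

noncomputable section

/-- The Landau level `Λ_j = b(d+2j)` as a point of `ℂ`. -/
def landauLevel (b : ℝ) (d : ℕ) (j : ℕ) : ℂ := ((b * (d + 2 * j) : ℝ) : ℂ)

/-- The union `A = ∪_j B(Λ_j, 2r_j)` with `r_j = dist(Λ_j, E \ {Λ_j})`. -/
def unionBalls (b : ℝ) (d : ℕ) : Set ℂ :=
  ⋃ j : ℕ, ball (landauLevel b d j)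
    (2 * infDist (landauLevel b d j) (landauLevels b d \ {landauLevel b d j}))

/-- For a set `S ⊆ ℂ`, the union `∪_{ω ∈ S} B(ω, 2 r_ω)` with `r_ω = dist(ω, S \ {ω})`. -/
def unionBallsOf (S : Set ℂ) : Set ℂ :=
  ⋃ ω ∈ S, ball ω (2 * infDist ω (S \ {ω}))

/-!
Every point of `I` lies within `r_e` of some `e ∈ E` (bracket it between two consecutive levels),
so away from the balls `B(e, 2 r_e)` the triangle inequality gives `dist(z, E) ≤ 2 dist(z, I)`.
The same covering holds for `φ_μ(I)` and `φ_μ(E)`: the gaps of the decreasing sequence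
`(Λ_j - μ)⁻¹` shrink, so the nearest neighbour of each term is the next one.

For (ii), `|φ_μ(z) - φ_μ(w)| = |z - w| / (|z - μ| |w - μ|)` and `|w - μ| ≤ |z - w| + |z - μ|`;
as `t ↦ t / (t + a)` increases, `dist(φ_μ(z), φ_μ(E)) ≥ δ / (a (δ + a))` with `δ = dist(z, E)`
and `a = |z - μ| ≤ (1 + ‖V‖_∞)(1 + |z|)`. On `A` one has `δ ≤ 4b`, whence `C = 1 / (1 + 4b)`.
-/

section Separation

variable {E I : Set ℂ}

theorem infDist_bounds_of_notMem_unionBallsOf (hEI : E ⊆ I) (hE : E.Nonempty)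
    (hcover : ∀ p ∈ I, ∃ e ∈ E, dist p e ≤ infDist e (E \ {e}))
    {z : ℂ} (hz : z ∉ unionBallsOf E) :
    infDist z E / 2 ≤ infDist z I ∧ infDist z I ≤ infDist z E := by
  refine ⟨(le_infDist (hE.mono hEI)).2 fun p hp => ?_, infDist_le_infDist_of_subset hEI hE⟩
  obtain ⟨e, he, hpe⟩ := hcover p hp
  have hze : 2 * infDist e (E \ {e}) ≤ dist z e := by
    by_contra! h
    exact hz (mem_biUnion he (mem_ball.2 h))
  linarith [infDist_le_dist_of_mem (x := z) he, dist_triangle z p e]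

theorem dist_le_infDist_range_diff {s : ℕ → ℝ} {j : ℕ}
    (hgap : ∀ k ≠ j, |s j - s (j + 1)| ≤ |s j - s k|) {x : ℝ} (hx : x ∈ uIcc (s j) (s (j + 1))) :
    dist (x : ℂ) (s j) ≤
      infDist (s j : ℂ) (range (fun k => (s k : ℂ)) \ {(s j : ℂ)}) := by
  rw [Complex.isometry_ofReal.dist_eq, Real.dist_eq]
  refine (abs_sub_left_of_mem_uIcc hx).trans ?_
  rcases eq_or_ne (s (j + 1)) (s j) with hs | hs
  · simpa [hs] using infDist_nonneg
  have hne : ((range fun k => (s k : ℂ)) \ {(s j : ℂ)}).Nonempty :=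
    ⟨_, mem_range_self (j + 1), by simpa using hs⟩
  refine (le_infDist hne).2 ?_
  rintro _ ⟨⟨k, rfl⟩, hk⟩
  have hkj : k ≠ j := by rintro rfl; exact hk rfl
  rw [Complex.isometry_ofReal.dist_eq, Real.dist_eq, abs_sub_comm (s (j + 1))]
  exact hgap k hkj

theorem abs_sub_succ_le_abs_sub_of_antitone {s : ℕ → ℝ} (hs : Antitone s)
    (hgap : Antitone fun j => s j - s (j + 1)) {j k : ℕ} (hkj : k ≠ j) :
    |s j - s (j + 1)| ≤ |s j - s k| := by
  rw [abs_of_nonneg (sub_nonneg.2 (hs j.le_succ))]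
  rcases hkj.lt_or_gt with hk | hk
  · obtain ⟨i, rfl⟩ := Nat.exists_eq_add_of_lt hk
    have hshrink : s (k + i + 1) - s (k + i + 1 + 1) ≤ s (k + i) - s (k + i + 1) :=
      hgap (Nat.le_add_right (k + i) 1)
    have hki : s (k + i) ≤ s k := hs (Nat.le_add_right k i)
    rw [abs_sub_comm]
    linarith [le_abs_self (s k - s (k + i + 1))]
  · linarith [hs (Nat.succ_le_of_lt hk), le_abs_self (s j - s k)]

theorem antitone_inv_add_mul {a h : ℝ} (ha : 0 < a) (hh : 0 ≤ h) :
    Antitone fun n : ℕ => (a + h * n)⁻¹ :=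
  fun m n hmn => inv_anti₀ (by positivity) (by gcongr)

theorem antitone_inv_add_mul_sub_succ {a h : ℝ} (ha : 0 < a) (hh : 0 ≤ h) :
    Antitone fun n : ℕ => (a + h * n)⁻¹ - (a + h * (n + 1 : ℕ))⁻¹ := by
  refine antitone_nat_of_succ_le fun n => ?_
  have hA : 0 < a + h * n := by positivity
  simp only [Nat.cast_add, Nat.cast_one]
  rw [inv_sub_inv (by positivity) (by positivity), inv_sub_inv (by positivity) (by positivity),
    div_le_div_iff₀ (by positivity) (by positivity)]
  ring_nf
  nlinarith [mul_nonneg hh hA.le, mul_nonneg (mul_nonneg hh hh) hA.le]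

end Separation

theorem div_le_infDist_image_inv_sub {𝕜 : Type*} [NormedField 𝕜] {E : Set 𝕜}
    (hE : E.Nonempty) {μ z : 𝕜} (hμE : μ ∉ E) (hz : z ≠ μ) :
    infDist z E / (‖z - μ‖ * (infDist z E + ‖z - μ‖)) ≤
      infDist (z - μ)⁻¹ ((fun w => (w - μ)⁻¹) '' E) := by
  refine (le_infDist (hE.image _)).2 ?_
  rintro _ ⟨w, hw, rfl⟩
  have hwμ : w - μ ≠ 0 := sub_ne_zero.2 fun h => hμE (h ▸ hw)
  have ha : 0 < ‖z - μ‖ := norm_pos_iff.2 (sub_ne_zero.2 hz)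
  have hδ : infDist z E ≤ dist z w := infDist_le_dist_of_mem hw
  have hwa : ‖w - μ‖ ≤ dist z w + ‖z - μ‖ := by
    rw [dist_comm, dist_eq_norm, ← sub_add_sub_cancel w z μ]
    exact norm_add_le _ _
  rw [dist_inv_inv₀ (sub_ne_zero.2 hz) hwμ, dist_sub_right]
  calc infDist z E / (‖z - μ‖ * (infDist z E + ‖z - μ‖))
      ≤ dist z w / (‖z - μ‖ * (dist z w + ‖z - μ‖)) := by
        have hδ0 : 0 ≤ infDist z E := infDist_nonneg
        rw [div_le_div_iff₀ (mul_pos ha (by linarith)) (mul_pos ha (by linarith))]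
        nlinarith [mul_le_mul_of_nonneg_right hδ (mul_nonneg ha.le ha.le)]
    _ ≤ dist z w / (‖z - μ‖ * ‖w - μ‖) := by
        gcongr

section LandauLevels

variable {b : ℝ} {d : ℕ}

theorem landauLevels_eq_range : landauLevels b d = range (landauLevel b d) := by
  ext z
  simp [landauLevels, landauLevel, eq_comm]

theorem unionBalls_eq_unionBallsOf : unionBalls b d = unionBallsOf (landauLevels b d) := by
  simp only [unionBalls, unionBallsOf, landauLevels_eq_range, biUnion_range]

theorem halfLine_eq_image_ofReal : halfLine b d = ((↑) : ℝ → ℂ) '' Ici (b * d) := by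
  ext z
  constructor
  · rintro ⟨him, hre⟩
    exact ⟨z.re, hre, Complex.ext (by simp) (by simp [him])⟩
  · rintro ⟨x, hx, rfl⟩
    exact ⟨Complex.ofReal_im x, hx⟩

theorem landauLevel_mem (j : ℕ) : landauLevel b d j ∈ landauLevels b d := ⟨j, rfl⟩

theorem landauLevels_nonempty : (landauLevels b d).Nonempty := ⟨_, landauLevel_mem 0⟩

theorem landauLevels_subset_halfLine (hb : 0 ≤ b) : landauLevels b d ⊆ halfLine b d := by
  rintro _ ⟨j, rfl⟩
  refine ⟨Complex.ofReal_im _, ?_⟩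
  simp only [Complex.ofReal_re]
  nlinarith [Nat.cast_nonneg (α := ℝ) j]

theorem exists_mem_Icc_landau (hb : 0 < b) {x : ℝ} (hx : b * d ≤ x) :
    ∃ j : ℕ, x ∈ Icc (b * (d + 2 * j)) (b * (d + 2 * (j + 1 : ℕ))) := by
  set t := (x - b * d) / (2 * b)
  have ht : t * (2 * b) = x - b * d := div_mul_cancel₀ _ (by positivity)
  refine ⟨⌊t⌋₊, ?_, ?_⟩
  · nlinarith [Nat.floor_le (div_nonneg (sub_nonneg.2 hx) (by positivity) : 0 ≤ t)]
  · push_cast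
    nlinarith [Nat.lt_floor_add_one t]

theorem abs_landau_sub_succ_le (hb : 0 < b) {j k : ℕ} (hkj : k ≠ j) :
    |b * (d + 2 * j) - b * (d + 2 * (j + 1 : ℕ))| ≤ |b * (d + 2 * j) - b * (d + 2 * k)| := by
  have hjk : (1 : ℝ) ≤ |(j : ℝ) - k| := by
    exact_mod_cast Int.one_le_abs (sub_ne_zero.2 (Int.natCast_inj.not.2 hkj.symm))
  have hsucc : b * (d + 2 * j) - b * (d + 2 * (j + 1 : ℕ)) = -(2 * b) := by push_cast; ring
  have hk : b * (d + 2 * j) - b * (d + 2 * k) = 2 * b * ((j : ℝ) - k) := by ring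
  have h2b : 0 < 2 * b := by positivity
  rw [hsucc, hk, abs_neg, abs_of_pos h2b, abs_mul, abs_of_pos h2b]
  nlinarith

theorem landauLevels_cover (hb : 0 < b) :
    ∀ p ∈ halfLine b d, ∃ e ∈ landauLevels b d,
      dist p e ≤ infDist e (landauLevels b d \ {e}) := by
  rw [halfLine_eq_image_ofReal, landauLevels_eq_range]
  rintro _ ⟨x, hx, rfl⟩
  obtain ⟨j, hj⟩ := exists_mem_Icc_landau hb hx
  exact ⟨_, mem_range_self j, dist_le_infDist_range_diff (s := fun j : ℕ => b * (d + 2 * j))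
    (fun _ hkj => abs_landau_sub_succ_le hb hkj) (Icc_subset_uIcc hj)⟩

theorem infDist_landauLevels_le_of_mem_unionBalls (hb : 0 < b) {z : ℂ}
    (hz : z ∈ unionBalls b d) : infDist z (landauLevels b d) ≤ 4 * b := by
  obtain ⟨j, hj⟩ := mem_iUnion.1 hz
  have hnext : landauLevel b d (j + 1) ∈ landauLevels b d \ {landauLevel b d j} := by
    refine ⟨landauLevel_mem (j + 1), ?_⟩
    simp only [landauLevel, mem_singleton_iff, Complex.ofReal_inj]
    push_cast
    nlinarith
  have hgap : dist (landauLevel b d j) (landauLevel b d (j + 1)) = 2 * b := by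
    rw [landauLevel, landauLevel, Complex.isometry_ofReal.dist_eq, Real.dist_eq]
    push_cast
    rw [show b * (d + 2 * j) - b * (d + 2 * (j + 1)) = -(2 * b) by ring, abs_neg,
      abs_of_pos (by positivity)]
  linarith [infDist_le_dist_of_mem (x := z) (landauLevel_mem (b := b) (d := d) j),
    mem_ball.1 hj, infDist_le_dist_of_mem (x := landauLevel b d j) hnext]

end LandauLevels

section InvertedLandauLevels

variable {b μ : ℝ} {d : ℕ}

theorem image_inv_sub_landauLevels :
    (fun w : ℂ => (w - μ)⁻¹) '' landauLevels b d =
      range fun j : ℕ => (((b * d - μ + 2 * b * j)⁻¹ : ℝ) : ℂ) := by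
  rw [landauLevels_eq_range, ← range_comp]
  congr 1
  funext j
  simp only [Function.comp, landauLevel]
  push_cast
  ring

theorem image_inv_sub_halfLine :
    (fun w : ℂ => (w - μ)⁻¹) '' halfLine b d =
      (fun x : ℝ => (((x - μ)⁻¹ : ℝ) : ℂ)) '' Ici (b * d) := by
  rw [halfLine_eq_image_ofReal, image_image]
  push_cast
  rfl

theorem image_landauLevels_cover (hb : 0 < b) (hμ : μ < b * d) :
    ∀ q ∈ (fun w : ℂ => (w - μ)⁻¹) '' halfLine b d,
      ∃ e ∈ (fun w : ℂ => (w - μ)⁻¹) '' landauLevels b d,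
        dist q e ≤ infDist e ((fun w : ℂ => (w - μ)⁻¹) '' landauLevels b d \ {e}) := by
  rw [image_inv_sub_halfLine, image_inv_sub_landauLevels]
  rintro _ ⟨x, hx, rfl⟩
  obtain ⟨j, hj₁, hj₂⟩ := exists_mem_Icc_landau hb hx
  have ha : 0 < b * d - μ := sub_pos.2 hμ
  have hh : 0 ≤ 2 * b := by positivity
  have hlo : b * d - μ + 2 * b * j ≤ x - μ := by linarith
  have hhi : x - μ ≤ b * d - μ + 2 * b * (j + 1 : ℕ) := by push_cast at hj₂ ⊢; linarith
  have hx' : (x - μ)⁻¹ ∈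
      uIcc (b * d - μ + 2 * b * j)⁻¹ (b * d - μ + 2 * b * (j + 1 : ℕ))⁻¹ := by
    rw [uIcc_comm]
    have hpos : 0 < b * d - μ + 2 * b * j := by positivity
    exact Icc_subset_uIcc ⟨inv_anti₀ (hpos.trans_le hlo) hhi, inv_anti₀ hpos hlo⟩
  exact ⟨_, mem_range_self j, dist_le_infDist_range_diff
    (s := fun n : ℕ => (b * d - μ + 2 * b * n)⁻¹)
    (fun _ hkj => abs_sub_succ_le_abs_sub_of_antitone (antitone_inv_add_mul ha hh)
      (antitone_inv_add_mul_sub_succ ha hh) hkj) hx'⟩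

theorem le_infDist_image_inv_sub_landauLevels (hb : 0 < b) (hμ : μ ≤ -1) {z : ℂ}
    (hz : z ∈ unionBalls b d) (hzμ : z ≠ μ) :
    (1 + 4 * b)⁻¹ * infDist z (landauLevels b d) / ((-μ) ^ 2 * (1 + ‖z‖) ^ 2) ≤
      infDist (z - μ)⁻¹ ((fun w : ℂ => (w - μ)⁻¹) '' landauLevels b d) := by
  have hμE : (μ : ℂ) ∉ landauLevels b d := fun h => by
    have := (landauLevels_subset_halfLine hb.le h).2
    simp only [Complex.ofReal_re] at this
    nlinarith [Nat.cast_nonneg (α := ℝ) d]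
  set δ := infDist z (landauLevels b d)
  set Y := -μ * (1 + ‖z‖)
  have hδ0 : 0 ≤ δ := infDist_nonneg
  have hδ : δ ≤ 4 * b := infDist_landauLevels_le_of_mem_unionBalls hb hz
  have ha : 0 < ‖z - μ‖ := norm_pos_iff.2 (sub_ne_zero.2 hzμ)
  have hY : 1 ≤ Y := by nlinarith [norm_nonneg z]
  have haY : ‖z - μ‖ ≤ Y :=
    calc ‖z - μ‖ ≤ ‖z‖ + ‖(μ : ℂ)‖ := norm_sub_le _ _
      _ = ‖z‖ - μ := by
        rw [Complex.norm_real, Real.norm_of_nonpos (by linarith), sub_eq_add_neg]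
      _ ≤ Y := by nlinarith [norm_nonneg z]
  calc (1 + 4 * b)⁻¹ * δ / ((-μ) ^ 2 * (1 + ‖z‖) ^ 2) = δ / ((1 + 4 * b) * Y ^ 2) := by
        rw [inv_mul_eq_div, div_div]
        ring
    _ ≤ δ / (‖z - μ‖ * (δ + ‖z - μ‖)) := by
        refine div_le_div_of_nonneg_left hδ0 (by positivity) ?_
        nlinarith [mul_le_mul haY (show δ + ‖z - μ‖ ≤ 4 * b + Y by linarith) (by positivity)
          (by linarith), mul_le_mul_of_nonneg_left (show Y ≤ Y ^ 2 by nlinarith) hb.le]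
    _ ≤ _ := div_le_infDist_image_inv_sub landauLevels_nonempty hμE hzμ

end InvertedLandauLevels

theorem near_and_far_from_landau_levels_general
    (b : ℝ) (hb : 0 < b) (d : ℕ) :
    ∃ Cc : ℝ, 0 < Cc ∧
      ∀ (V : EuclideanSpace ℝ (Fin (2 * d)) → ℂ), MemLp V ⊤ volume →
      ∀ lam : ℂ,
        (lam ∉ unionBalls b d →
          infDist lam (landauLevels b d) / 2 ≤ infDist lam (halfLine b d) ∧
          infDist lam (halfLine b d) ≤ infDist lam (landauLevels b d)) ∧
        (lam ≠ ((-(supNorm V) - 1 : ℝ) : ℂ) →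
          (lam - ((-(supNorm V) - 1 : ℝ) : ℂ))⁻¹ ∉
            unionBallsOf ((fun w : ℂ => (w - ((-(supNorm V) - 1 : ℝ) : ℂ))⁻¹) ''
              landauLevels b d) →
          infDist ((lam - ((-(supNorm V) - 1 : ℝ) : ℂ))⁻¹)
              ((fun w : ℂ => (w - ((-(supNorm V) - 1 : ℝ) : ℂ))⁻¹) '' landauLevels b d) / 2 ≤
            infDist ((lam - ((-(supNorm V) - 1 : ℝ) : ℂ))⁻¹)
              ((fun w : ℂ => (w - ((-(supNorm V) - 1 : ℝ) : ℂ))⁻¹) '' halfLine b d) ∧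
          infDist ((lam - ((-(supNorm V) - 1 : ℝ) : ℂ))⁻¹)
              ((fun w : ℂ => (w - ((-(supNorm V) - 1 : ℝ) : ℂ))⁻¹) '' halfLine b d) ≤
            infDist ((lam - ((-(supNorm V) - 1 : ℝ) : ℂ))⁻¹)
              ((fun w : ℂ => (w - ((-(supNorm V) - 1 : ℝ) : ℂ))⁻¹) '' landauLevels b d)) ∧
        (lam ∈ unionBalls b d → lam ≠ ((-(supNorm V) - 1 : ℝ) : ℂ) →
          Cc * infDist lam (landauLevels b d) /
              ((1 + supNorm V) ^ 2 * (1 + ‖lam‖) ^ 2) ≤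
            infDist ((lam - ((-(supNorm V) - 1 : ℝ) : ℂ))⁻¹)
              ((fun w : ℂ => (w - ((-(supNorm V) - 1 : ℝ) : ℂ))⁻¹) '' landauLevels b d)) := by
  refine ⟨(1 + 4 * b)⁻¹, by positivity, fun V _ lam => ⟨fun hlam => ?_, fun _ hlam => ?_,
    fun hlam hne => ?_⟩⟩
  · rw [unionBalls_eq_unionBallsOf] at hlam
    exact infDist_bounds_of_notMem_unionBallsOf (landauLevels_subset_halfLine hb.le)
      landauLevels_nonempty (landauLevels_cover hb) hlam
  · have hV : 0 ≤ supNorm V := ENNReal.toReal_nonneg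
    have hbd : 0 ≤ b * d := by positivity
    exact infDist_bounds_of_notMem_unionBallsOf (image_mono (landauLevels_subset_halfLine hb.le))
      (landauLevels_nonempty.image _) (image_landauLevels_cover hb (by linarith)) hlam
  · have hV : 0 ≤ supNorm V := ENNReal.toReal_nonneg
    have := le_infDist_image_inv_sub_landauLevels hb (by linarith) hlam hne
    rwa [show -(-supNorm V - 1) = 1 + supNorm V by ring] at this

/-- **Lemma 6.4.**  Let `μ = -‖V‖_∞ - 1`, `φ_μ(λ) = (λ-μ)⁻¹`, `I = [Λ₀,∞)`,
`E = {Λ_j}_j ⊆ I`, `r_j = dist(Λ_j, E \ {Λ_j}) (= 2b)`, `A = ∪_j B(Λ_j, 2r_j)`,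
`D = ℂ \ A`, and analogously `𝒜 = ∪_{ω ∈ φ_μ(E)} B(ω, 2r_ω)`, `𝒟 = ℂ \ 𝒜`.  Then:
(i) for `λ ∈ D`, `dist(λ,E)/2 ≤ dist(λ,I) ≤ dist(λ,E)`, and for `φ_μ(λ) ∈ 𝒟`,
`dist(φ_μ(λ),φ_μ(E))/2 ≤ dist(φ_μ(λ),φ_μ(I)) ≤ dist(φ_μ(λ),φ_μ(E))`;
(ii) there is `C = C(b,d)` such that for every `λ ∈ A`,
`dist(φ_μ(λ), φ_μ(E)) ≥ C dist(λ,E) / ((1+‖V‖_∞)² (1+|λ|)²)`. -/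
theorem near_and_far_from_landau_levels
    (b : ℝ) (hb : 0 < b) (d : ℕ) (hd : 1 ≤ d) :
    ∃ Cc : ℝ, 0 < Cc ∧
      ∀ (V : EuclideanSpace ℝ (Fin (2 * d)) → ℂ), MemLp V ⊤ volume →
      ∀ lam : ℂ,
        (lam ∉ unionBalls b d →
          infDist lam (landauLevels b d) / 2 ≤ infDist lam (halfLine b d) ∧
          infDist lam (halfLine b d) ≤ infDist lam (landauLevels b d)) ∧
        (lam ≠ ((-(supNorm V) - 1 : ℝ) : ℂ) →
          (lam - ((-(supNorm V) - 1 : ℝ) : ℂ))⁻¹ ∉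
            unionBallsOf ((fun w : ℂ => (w - ((-(supNorm V) - 1 : ℝ) : ℂ))⁻¹) ''
              landauLevels b d) →
          infDist ((lam - ((-(supNorm V) - 1 : ℝ) : ℂ))⁻¹)
              ((fun w : ℂ => (w - ((-(supNorm V) - 1 : ℝ) : ℂ))⁻¹) '' landauLevels b d) / 2 ≤
            infDist ((lam - ((-(supNorm V) - 1 : ℝ) : ℂ))⁻¹)
              ((fun w : ℂ => (w - ((-(supNorm V) - 1 : ℝ) : ℂ))⁻¹) '' halfLine b d) ∧
          infDist ((lam - ((-(supNorm V) - 1 : ℝ) : ℂ))⁻¹)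
              ((fun w : ℂ => (w - ((-(supNorm V) - 1 : ℝ) : ℂ))⁻¹) '' halfLine b d) ≤
            infDist ((lam - ((-(supNorm V) - 1 : ℝ) : ℂ))⁻¹)
              ((fun w : ℂ => (w - ((-(supNorm V) - 1 : ℝ) : ℂ))⁻¹) '' landauLevels b d)) ∧
        (lam ∈ unionBalls b d → lam ≠ ((-(supNorm V) - 1 : ℝ) : ℂ) →
          Cc * infDist lam (landauLevels b d) /
              ((1 + supNorm V) ^ 2 * (1 + ‖lam‖) ^ 2) ≤
            infDist ((lam - ((-(supNorm V) - 1 : ℝ) : ℂ))⁻¹)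
              ((fun w : ℂ => (w - ((-(supNorm V) - 1 : ℝ) : ℂ))⁻¹) '' landauLevels b d)) :=
  near_and_far_from_landau_levels_general b hb d

end
end
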